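/- Let G be a finite connected simple graph with domination number γ(G) ≥ 2 and let H be a finite simple graph. If X is a maximum total mutual-visibility set of the lexicographic product G ∘ H, then for every vertex u ∈ V(G), |({u} × V(H)) ∩ X| ≥ n(H) − 1. -/

import Mathlib

open SimpleGraph

/-- `X` is a total mutual-visibility set of `G`: every two vertices of `G` are `X`-visible,
i.e. joined by a shortest path whose internal vertices avoid `X`. -/
def IsTMVSet {V : Type*} (G : SimpleGraph V) (X : Set V) : Prop :=
  ∀ x y : V, ∃ p : G.Walk x y, p.length = G.dist x y ∧
    ∀ w ∈ p.support, w ≠ x → w ≠ y → w ∉ X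

/-- The total mutual-visibility number of `G`. -/
noncomputable def muT {V : Type*} (G : SimpleGraph V) : ℕ :=
  sSup {n : ℕ | ∃ X : Set V, IsTMVSet G X ∧ X.ncard = n}

/-- `D` is a dominating set of `G`. -/
def IsDomSet {V : Type*} (G : SimpleGraph V) (D : Set V) : Prop :=
  ∀ v : V, v ∉ D → ∃ u ∈ D, G.Adj u v

/-- The domination number of `G`. -/
noncomputable def gammaDom {V : Type*} (G : SimpleGraph V) : ℕ :=
  sInf {n : ℕ | ∃ D : Set V, IsDomSet G D ∧ D.ncard = n}

/-- `D` is a connected dominating set of `G`. -/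
def IsConnDomSet {V : Type*} (G : SimpleGraph V) (D : Set V) : Prop :=
  IsDomSet G D ∧ (G.induce D).Connected

/-- The connected domination number of `G`. -/
noncomputable def gammaConnDom {V : Type*} (G : SimpleGraph V) : ℕ :=
  sInf {n : ℕ | ∃ D : Set V, IsConnDomSet G D ∧ D.ncard = n}

/-- The closed neighborhood of a vertex. -/
def closedNbhd {V : Type*} (G : SimpleGraph V) (v : V) : Set V :=
  insert v (G.neighborSet v)

/-- The set of simplicial vertices of `G`. -/
def simpSet {V : Type*} (G : SimpleGraph V) : Set V :=
  {v | G.IsClique (G.neighborSet v)}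

/-- The set `P(G)` of vertices that appear as the unique common closed neighbor of
two vertices. -/
def pSet {V : Type*} (G : SimpleGraph V) : Set V :=
  {v | ∃ u w : V, closedNbhd G u ∩ closedNbhd G w = {v}}

/-- The set `C(G)` of vertices belonging to every maximum total mutual-visibility set. -/
def compulsorySet {V : Type*} (G : SimpleGraph V) : Set V :=
  {v | ∀ X : Set V, IsTMVSet G X → X.ncard = muT G → v ∈ X}

/-- The set `F(G)` of vertices belonging to no maximum total mutual-visibility set. -/
def forbiddenSet {V : Type*} (G : SimpleGraph V) : Set V :=
  {v | ∀ X : Set V, IsTMVSet G X → X.ncard = muT G → v ∉ X}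

/-- The independent total mutual-visibility number of `G`. -/
noncomputable def muIT {V : Type*} (G : SimpleGraph V) : ℕ :=
  sSup {n : ℕ | ∃ X : Set V, IsTMVSet G X ∧ (∀ u ∈ X, ∀ v ∈ X, ¬ G.Adj u v) ∧ X.ncard = n}

/-- The join `G + H` of two graphs. -/
def joinGraph {V W : Type*} (G : SimpleGraph V) (H : SimpleGraph W) :
    SimpleGraph (V ⊕ W) :=
  SimpleGraph.fromRel (fun x y =>
    (∃ a b, x = Sum.inl a ∧ y = Sum.inl b ∧ G.Adj a b) ∨
    (∃ a b, x = Sum.inr a ∧ y = Sum.inr b ∧ H.Adj a b) ∨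
    (∃ a b, x = Sum.inl a ∧ y = Sum.inr b))

/-- The corona product `G ⊙ H`: a copy of `G` together with a copy `Hᵢ` of `H` for each
vertex `uᵢ` of `G`, where `uᵢ` is joined to all vertices of `Hᵢ`. -/
def coronaProd {V W : Type*} (G : SimpleGraph V) (H : SimpleGraph W) :
    SimpleGraph (V ⊕ V × W) :=
  SimpleGraph.fromRel (fun x y =>
    (∃ a b, x = Sum.inl a ∧ y = Sum.inl b ∧ G.Adj a b) ∨
    (∃ i w w', x = Sum.inr (i, w) ∧ y = Sum.inr (i, w') ∧ H.Adj w w') ∨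
    (∃ i w, x = Sum.inl i ∧ y = Sum.inr (i, w)))

/-- The lexicographic product `G ∘ H`. -/
def lexProd {V W : Type*} (G : SimpleGraph V) (H : SimpleGraph W) :
    SimpleGraph (V × W) where
  Adj x y := G.Adj x.1 y.1 ∨ (x.1 = y.1 ∧ H.Adj x.2 y.2)
  symm := ⟨fun x y h => by
    rcases h with h | ⟨h1, h2⟩
    · exact Or.inl h.symm
    · exact Or.inr ⟨h1.symm, h2.symm⟩⟩
  loopless := ⟨fun x h => by
    rcases h with h | ⟨_, h⟩
    · exact G.loopless.irrefl _ h
    · exact H.loopless.irrefl _ h⟩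

/-- `B` induces a 2-connected subgraph of `G`. -/
def IsTwoConnSet {V : Type*} (G : SimpleGraph V) (B : Set V) : Prop :=
  3 ≤ B.ncard ∧ (G.induce B).Connected ∧ ∀ v ∈ B, (G.induce (B \ {v})).Connected

/-!
If a layer `{u} × V(H)` missed two vertices `(u, w₁)` and `(u, w₂)` of `X`, then `X ∪ {(u, w₁)}`
would still be a total mutual-visibility set, contradicting maximality. Between different
layers, `G ∘ H` has the distances of `G` and every step of a shortest path is a `G`-step, so
`(u, w₁)` can be replaced by `(u, w₂)` on such a path. Two non-adjacent vertices of a layer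
`{g} × V(H)` are at distance 2; as `γ(G) ≥ 2`, `g` has a non-neighbour `z`, and a shortest
`X`-avoiding path from `(g, c)` to `(z, c)` starts with a common neighbour of the two outside `X`.
-/

def Visible {V : Type*} (G : SimpleGraph V) (X : Set V) (x y : V) : Prop :=
  ∃ p : G.Walk x y, p.length = G.dist x y ∧ ∀ w ∈ p.support, w ≠ x → w ≠ y → w ∉ X

section Visible

variable {V : Type*} {G : SimpleGraph V} {X : Set V} {x y : V}

lemma visible_self (x : V) : Visible G X x x :=
  ⟨.nil, by simp, fun _ hw hwx _ => absurd (List.mem_singleton.1 hw) hwx⟩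

lemma visible_of_adj (h : G.Adj x y) : Visible G X x y := by
  refine ⟨.cons h .nil, by simp [dist_eq_one_iff_adj.2 h], fun w hw hwx hwy => ?_⟩
  simp only [Walk.support_cons, Walk.support_nil, List.mem_cons, List.not_mem_nil,
    or_false] at hw
  rcases hw with rfl | rfl <;> contradiction

lemma visible_of_adj_of_adj {m : V} (hne : x ≠ y) (hxy : ¬G.Adj x y) (hxm : G.Adj x m)
    (hmy : G.Adj m y) (hm : m ∉ X) : Visible G X x y := by
  let p : G.Walk x y := .cons hxm (.cons hmy .nil)
  have hlt : 1 < G.dist x y := p.reachable.one_lt_dist_of_ne_of_not_adj hne hxy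
  have hle : G.dist x y ≤ 2 := dist_le p
  refine ⟨p, by simp only [p, Walk.length_cons, Walk.length_nil]; omega, fun w hw hwx hwy => ?_⟩
  simp only [p, Walk.support_cons, Walk.support_nil, List.mem_cons, List.not_mem_nil,
    or_false] at hw
  rcases hw with rfl | rfl | rfl
  exacts [absurd rfl hwx, hm, absurd rfl hwy]

lemma Visible.insert_of_eq_or_eq {a : V} (h : Visible G X x y) (ha : a = x ∨ a = y) :
    Visible G (insert a X) x y := by
  obtain ⟨p, hp, hpX⟩ := h
  refine ⟨p, hp, fun w hw hwx hwy => ?_⟩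
  rintro (rfl | hwX)
  · rcases ha with rfl | rfl <;> contradiction
  · exact hpX w hw hwx hwy hwX

end Visible

lemma IsTMVSet.ncard_le_muT {V : Type*} [Finite V] {G : SimpleGraph V} {X : Set V}
    (hX : IsTMVSet G X) : X.ncard ≤ muT G :=
  le_csSup ⟨Nat.card V, by rintro n ⟨Y, -, rfl⟩; exact Set.ncard_le_card Y⟩ ⟨X, hX, rfl⟩

lemma gammaDom_le_one_of_forall_adj {V : Type*} {G : SimpleGraph V} {g : V}
    (h : ∀ v, v ≠ g → G.Adj g v) : gammaDom G ≤ 1 :=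
  Nat.sInf_le ⟨{g}, fun v hv => ⟨g, rfl, h v hv⟩, Set.ncard_singleton g⟩

lemma exists_ne_not_adj_of_two_le_gammaDom {V : Type*} {G : SimpleGraph V}
    (hγ : 2 ≤ gammaDom G) (g : V) : ∃ z, z ≠ g ∧ ¬G.Adj g z := by
  by_contra! h
  have := gammaDom_le_one_of_forall_adj h
  omega

lemma update_id_notMem_insert {α : Type*} [DecidableEq α] {X : Set α} {a b z : α}
    (hab : a ≠ b) (hb : b ∉ X) (hz : z ∉ X) : Function.update id a b z ∉ insert a X := by
  by_cases hza : z = a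
  · subst hza
    simpa [hab.symm] using hb
  · simpa [Function.update_of_ne hza, hza] using hz

lemma fst_update_id {α β : Type*} [DecidableEq (α × β)] {a b : α × β} (h : a.1 = b.1)
    (z : α × β) : (Function.update id a b z).1 = z.1 := by
  by_cases hz : z = a
  · simp [hz, h]
  · simp [Function.update_of_ne hz]

lemma card_sub_one_le_ncard_of_subsingleton_compl {α : Type*} [Fintype α] {S : Set α}
    (h : Sᶜ.Subsingleton) : Fintype.card α - 1 ≤ S.ncard := by
  have hsum := Set.ncard_add_ncard_compl S
  have hle : Sᶜ.ncard ≤ 1 := Set.ncard_le_one_iff_subsingleton.2 h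
  rw [Nat.card_eq_fintype_card] at hsum
  omega

section LexProd

variable {V W : Type*} {G : SimpleGraph V} {H : SimpleGraph W}

def lexProdLayerHom (G : SimpleGraph V) (H : SimpleGraph W) (c : W) : G →g lexProd G H where
  toFun v := (v, c)
  map_rel' h := Or.inl h

lemma dist_fst_le_length {a b : V × W} (q : (lexProd G H).Walk a b) :
    G.dist a.1 b.1 ≤ q.length := by
  induction q with
  | nil => simp
  | @cons a c b e r ih =>
    rw [Walk.length_cons]
    rcases e with hadj | ⟨heq, -⟩
    · have := hadj.reachable.dist_triangle_left b.1
      rw [dist_eq_one_iff_adj.2 hadj] at this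
      omega
    · rw [heq]
      omega

lemma adj_fst_and_length_eq_dist_of_cons {a c b : V × W} (e : (lexProd G H).Adj a c)
    (r : (lexProd G H).Walk c b) (hq : (Walk.cons e r).length = G.dist a.1 b.1) :
    G.Adj a.1 c.1 ∧ r.length = G.dist c.1 b.1 := by
  rw [Walk.length_cons] at hq
  have hr := dist_fst_le_length r
  have hadj : G.Adj a.1 c.1 := by
    rcases e with hadj | ⟨heq, -⟩
    · exact hadj
    · rw [heq] at hq
      omega
  have := hadj.reachable.dist_triangle_left b.1
  rw [dist_eq_one_iff_adj.2 hadj] at this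
  exact ⟨hadj, by omega⟩

lemma lexProd_dist_of_fst_ne {a b : V × W} (hr : G.Reachable a.1 b.1) (hne : a.1 ≠ b.1) :
    (lexProd G H).dist a b = G.dist a.1 b.1 := by
  obtain ⟨a1, a2⟩ := a
  obtain ⟨b1, b2⟩ := b
  dsimp only at hr hne ⊢
  obtain ⟨p, hp⟩ := hr.exists_walk_length_eq_dist
  cases p with
  | nil => exact absurd rfl hne
  | @cons _ m _ e r =>
    let q : (lexProd G H).Walk (a1, a2) (b1, b2) :=
      .cons (v := (m, b2)) (Or.inl e) (r.map (lexProdLayerHom G H b2))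
    have hq : q.length = G.dist a1 b1 := by
      rw [← hp, Walk.length_cons, ← Walk.length_map (lexProdLayerHom G H b2) r]
      rfl
    refine le_antisymm (hq ▸ dist_le q) ?_
    obtain ⟨q', hq'⟩ := q.reachable.exists_walk_length_eq_dist
    exact hq' ▸ dist_fst_le_length q'

lemma exists_walk_support_map_of_length_eq_dist {f : V × W → V × W} (hf : ∀ z, (f z).1 = z.1)
    {a b : V × W} (q : (lexProd G H).Walk a b) (hq : q.length = G.dist a.1 b.1) :
    ∃ q' : (lexProd G H).Walk (f a) (f b), q'.length = q.length ∧
      q'.support = q.support.map f := by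
  induction q with
  | nil => exact ⟨.nil, rfl, rfl⟩
  | @cons a c b e r ih =>
    obtain ⟨hadj, hr⟩ := adj_fst_and_length_eq_dist_of_cons e r hq
    obtain ⟨r', hr'len, hr'supp⟩ := ih hr
    have e' : (lexProd G H).Adj (f a) (f c) := Or.inl (by rw [hf, hf]; exact hadj)
    exact ⟨.cons e' r', by simp [hr'len], by simp [hr'supp]⟩

variable {X : Set (V × W)}

lemma exists_notMem_adj_fst (hG : G.Connected) (hγ : 2 ≤ gammaDom G)
    (hX : IsTMVSet (lexProd G H) X) (g : V) (c : W) : ∃ m ∉ X, G.Adj g m.1 := by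
  obtain ⟨z, hzg, hgz⟩ := exists_ne_not_adj_of_two_le_gammaDom hγ g
  obtain ⟨q, hq, hqX⟩ := hX (g, c) (z, c)
  rw [lexProd_dist_of_fst_ne (hG g z) hzg.symm] at hq
  cases q with
  | nil => exact absurd rfl hzg
  | @cons _ m _ e r =>
    have hadj := (adj_fst_and_length_eq_dist_of_cons e r hq).1
    refine ⟨m, hqX m (by simp) ?_ ?_, hadj⟩
    · rintro rfl
      exact hadj.ne rfl
    · rintro rfl
      exact hgz hadj

lemma visible_insert_of_fst_ne (hG : G.Connected) (hX : IsTMVSet (lexProd G H) X)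
    {a b : V × W} (hfst : a.1 = b.1) (hab : a ≠ b) (hb : b ∉ X) {x y : V × W} (hxy : x.1 ≠ y.1) :
    Visible (lexProd G H) (insert a X) x y := by
  classical
  by_cases ha : a = x ∨ a = y
  · exact Visible.insert_of_eq_or_eq (hX x y) ha
  push Not at ha
  obtain ⟨q, hq, hqX⟩ := hX x y
  have hdist := lexProd_dist_of_fst_ne (H := H) (hG x.1 y.1) hxy
  obtain ⟨q', hq'len, hq'supp⟩ :=
    exists_walk_support_map_of_length_eq_dist (fst_update_id hfst) q (hq.trans hdist)
  have hfx : Function.update id a b x = x := by simp [Function.update_of_ne ha.1.symm]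
  have hfy : Function.update id a b y = y := by simp [Function.update_of_ne ha.2.symm]
  refine ⟨q'.copy hfx hfy, by simp [hq'len, hq], fun w hw hwx hwy => ?_⟩
  rw [Walk.support_copy, hq'supp, List.mem_map] at hw
  obtain ⟨z, hz, rfl⟩ := hw
  have hzx : z ≠ x := by rintro rfl; exact hwx hfx
  have hzy : z ≠ y := by rintro rfl; exact hwy hfy
  exact update_id_notMem_insert hab hb (hqX z hz hzx hzy)

lemma IsTMVSet.insert_lexProd (hG : G.Connected) (hγ : 2 ≤ gammaDom G)
    (hX : IsTMVSet (lexProd G H) X) {a b : V × W} (hfst : a.1 = b.1) (hab : a ≠ b)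
    (hb : b ∉ X) : IsTMVSet (lexProd G H) (insert a X) := by
  classical
  intro x y
  change Visible (lexProd G H) (insert a X) x y
  rcases ne_or_eq x.1 y.1 with hxy | hxy
  · exact visible_insert_of_fst_ne hG hX hfst hab hb hxy
  rcases eq_or_ne x y with rfl | hne
  · exact visible_self x
  by_cases hadj : (lexProd G H).Adj x y
  · exact visible_of_adj hadj
  obtain ⟨m, hmX, hm⟩ := exists_notMem_adj_fst hG hγ hX x.1 x.2
  have hf := fst_update_id hfst m
  exact visible_of_adj_of_adj hne hadj (Or.inl (hf ▸ hm)) (Or.inl (hxy ▸ hf ▸ hm.symm))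
    (update_id_notMem_insert hab hb hmX)

end LexProd

/-- In a maximum total mutual-visibility set of `G ∘ H` (with `γ(G) ≥ 2`),
every `H`-layer misses at most one vertex. -/
theorem lexProd_layer_card_of_max_tmv {V W : Type*} [Fintype V] [Fintype W]
    (G : SimpleGraph V) (H : SimpleGraph W) (hG : G.Connected) (hγ : 2 ≤ gammaDom G)
    (X : Set (V × W)) (hX : IsTMVSet (lexProd G H) X)
    (hmax : X.ncard = muT (lexProd G H)) :
    ∀ u : V, Fintype.card W - 1 ≤ {p : V × W | p.1 = u ∧ p ∈ X}.ncard := by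
  intro u
  have hmissing : {w | (u, w) ∈ X}ᶜ.Subsingleton := by
    intro w₁ hw₁ w₂ hw₂
    by_contra hne
    have hins := hX.insert_lexProd hG hγ (a := (u, w₁)) (b := (u, w₂)) rfl
      (by simpa using hne) hw₂
    have := hins.ncard_le_muT
    rw [Set.ncard_insert_of_notMem (show (u, w₁) ∉ X from hw₁)] at this
    omega
  have hlayer : {p : V × W | p.1 = u ∧ p ∈ X} = Prod.mk u '' {w | (u, w) ∈ X} := by
    ext ⟨v, w⟩
    constructor
    · rintro ⟨rfl, h⟩
      exact ⟨w, h, rfl⟩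
    · rintro ⟨w, h, ⟨⟩⟩
      exact ⟨rfl, h⟩
  rw [hlayer, Set.ncard_image_of_injective _ (Prod.mk_right_injective u)]
  exact card_sub_one_le_ncard_of_subsingleton_compl hmissing
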